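/- Let n ∈ ℕ, 0 < d ≤ n, θ ≥ 1 with θd ≤ n, and 0 < q ≤ p < ∞. Then for every measurable function f on ℝ^n, ‖f‖_{M^{θp}_{θq}(H^{θd})} ≤ θ ‖f‖_{M^p_q(H^d)}. -/

import Mathlib

open MeasureTheory Set ENNReal

noncomputable section

/-- The axis-parallel closed cube with corner `a` and side length `l`. -/
def cubeSet (n : ℕ) (a : Fin n → ℝ) (l : ℝ) : Set (Fin n → ℝ) :=
  {x | ∀ i, a i ≤ x i ∧ x i ≤ a i + l}

/-- The `d`-dimensional Hausdorff content of `E ⊆ ℝⁿ`, defined as the infimum of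
`∑ ℓ(Q_j)^d` over all countable coverings of `E` by axis-parallel cubes. -/
def hContent (n : ℕ) (d : ℝ) (E : Set (Fin n → ℝ)) : ℝ≥0∞ :=
  ⨅ (c : ℕ → (Fin n → ℝ) × ℝ) (_ : E ⊆ ⋃ j, cubeSet n (c j).1 (c j).2),
    ∑' j, ENNReal.ofReal ((c j).2) ^ d

/-- The Choquet integral `∫ g dH^d = ∫_0^∞ H^d({x : g x > t}) dt` of a
nonnegative (`ℝ≥0∞`-valued) function. -/
def choquetIntegral (n : ℕ) (d : ℝ) (g : (Fin n → ℝ) → ℝ≥0∞) : ℝ≥0∞ :=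
  ∫⁻ t in Set.Ioi (0 : ℝ), hContent n d {x | ENNReal.ofReal t < g x}

/-- The Choquet `L^p(H^d)` norm of an `ℝ≥0∞`-valued function. -/
def choquetLpNormE (n : ℕ) (d p : ℝ) (g : (Fin n → ℝ) → ℝ≥0∞) : ℝ≥0∞ :=
  (choquetIntegral n d fun x => g x ^ p) ^ (1 / p)

/-- The Choquet `L^p(H^d)` norm of a real-valued function. -/
def choquetLpNorm (n : ℕ) (d p : ℝ) (f : (Fin n → ℝ) → ℝ) : ℝ≥0∞ :=
  choquetLpNormE n d p fun x => ENNReal.ofReal |f x|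

/-- The weak Choquet `L^p(H^d)` norm of an `ℝ≥0∞`-valued function. -/
def weakNormE (n : ℕ) (d p : ℝ) (g : (Fin n → ℝ) → ℝ≥0∞) : ℝ≥0∞ :=
  ⨆ (t : ℝ) (_ : 0 < t),
    ENNReal.ofReal t * hContent n d {x | ENNReal.ofReal t < g x} ^ (1 / p)

/-- The weak Choquet `L^p(H^d)` norm of a real-valued function. -/
def weakChoquetLpNorm (n : ℕ) (d p : ℝ) (f : (Fin n → ℝ) → ℝ) : ℝ≥0∞ :=
  weakNormE n d p fun x => ENNReal.ofReal |f x|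

/-- The Choquet integral `∫_E |f|^q dH^d` over a set `E`. -/
def choquetSetLq (n : ℕ) (d q : ℝ) (E : Set (Fin n → ℝ)) (f : (Fin n → ℝ) → ℝ) : ℝ≥0∞ :=
  choquetIntegral n d (E.indicator fun x => ENNReal.ofReal |f x| ^ q)

/-- The Choquet–Morrey `𝓜^p_q(H^d)` norm of an `ℝ≥0∞`-valued function. -/
def morreyNormE (n : ℕ) (d p q : ℝ) (g : (Fin n → ℝ) → ℝ≥0∞) : ℝ≥0∞ :=
  ⨆ (a : Fin n → ℝ) (l : ℝ) (_ : 0 < l),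
    ENNReal.ofReal (l ^ (d / p - d / q)) *
      (choquetIntegral n d ((cubeSet n a l).indicator fun x => g x ^ q)) ^ (1 / q)

/-- The Choquet–Morrey `𝓜^p_q(H^d)` norm of a real-valued function. -/
def morreyNorm (n : ℕ) (d p q : ℝ) (f : (Fin n → ℝ) → ℝ) : ℝ≥0∞ :=
  morreyNormE n d p q fun x => ENNReal.ofReal |f x|

/-- The Lorentz `L^{p,r}(H^d)` quasinorm of a real-valued function. -/
def lorentzNorm (n : ℕ) (d p r : ℝ) (f : (Fin n → ℝ) → ℝ) : ℝ≥0∞ :=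
  (∫⁻ t in Set.Ioi (0 : ℝ),
      ((ENNReal.ofReal t) ^ p * hContent n d {x | t < |f x|}) ^ (r / p) *
        (ENNReal.ofReal t)⁻¹) ^ (1 / r)

/-- The fractional maximal operator `M_α` (with values in `ℝ≥0∞`). -/
def fracMaximal (n : ℕ) (α : ℝ) (f : (Fin n → ℝ) → ℝ) (x : Fin n → ℝ) : ℝ≥0∞ :=
  ⨆ (a : Fin n → ℝ) (l : ℝ) (_ : 0 < l) (_ : x ∈ cubeSet n a l),
    ENNReal.ofReal (l ^ (α - (n : ℝ))) * ∫⁻ y in cubeSet n a l, ENNReal.ofReal |f y|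

/-- The Euclidean norm on `Fin n → ℝ`. -/
def euclNorm {n : ℕ} (x : Fin n → ℝ) : ℝ := Real.sqrt (∑ i, x i ^ 2)

/-- The fractional integral operator `I_α`. -/
def fracIntegral (n : ℕ) (α : ℝ) (f : (Fin n → ℝ) → ℝ) (x : Fin n → ℝ) : ℝ :=
  ∫ y, f y / euclNorm (x - y) ^ ((n : ℝ) - α)

/-!
Raising each covering sum to the power `θ ≥ 1` gives `∑ ℓⱼ^{θd} ≤ (∑ ℓⱼ^d)^θ`, hence
`H^{θd}(E) ≤ H^d(E)^θ`. With `F(s) = H^d({h > s})`, which is antitone, the Choquet integral of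
`h^θ` against `H^{θd}` is therefore at most `∫₀^∞ F(t^{1/θ})^θ dt`, and this is at most
`(∫₀^∞ F)^θ`: the level sets of an antitone function are initial intervals, so those of
`m(t) = F(t^{1/θ})` have measure at most `|{F > v}|^θ`, and `‖m‖_θ ≤ ∫₀^∞ |{m > v}|^{1/θ} dv`
(the embedding `L^{θ,1} ⊆ L^θ`) follows from Hölder's inequality on each level set of `m`. On every
cube this bounds the `𝓜^{θp}_{θq}(H^{θd})` quotient by the `𝓜^p_q(H^d)` one.
-/

theorem ENNReal.rpow_eq_rpow_sub_one_mul {θ : ℝ} (hθ : 1 ≤ θ) (x : ℝ≥0∞) :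
    x ^ θ = x ^ (θ - 1) * x := by
  simpa using ENNReal.rpow_add_of_nonneg (x := x) (θ - 1) 1 (sub_nonneg.2 hθ) zero_le_one

theorem ENNReal.tsum_rpow_le_rpow_tsum {θ : ℝ} (hθ : 1 ≤ θ) (a : ℕ → ℝ≥0∞) :
    ∑' j, a j ^ θ ≤ (∑' j, a j) ^ θ :=
  calc ∑' j, a j ^ θ ≤ ∑' j, (∑' i, a i) ^ (θ - 1) * a j := by
        refine ENNReal.tsum_le_tsum fun j => ?_
        rw [ENNReal.rpow_eq_rpow_sub_one_mul hθ]
        gcongr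
        exact ENNReal.le_tsum j
    _ = (∑' j, a j) ^ θ := by rw [ENNReal.tsum_mul_left, ← ENNReal.rpow_eq_rpow_sub_one_mul hθ]

section HausdorffContent

variable {n : ℕ}

theorem hContent_mono {d : ℝ} {E E' : Set (Fin n → ℝ)} (h : E ⊆ E') :
    hContent n d E ≤ hContent n d E' :=
  le_iInf₂ fun c hc => iInf₂_le c (h.trans hc)

theorem hContent_mul_le_rpow {d θ : ℝ} (hθ : 1 ≤ θ) (E : Set (Fin n → ℝ)) :
    hContent n (θ * d) E ≤ hContent n d E ^ θ := by
  have hθ0 : 0 < θ := zero_lt_one.trans_le hθ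
  rw [← ENNReal.rpow_inv_le_iff hθ0]
  refine le_iInf₂ fun c hc => (ENNReal.rpow_inv_le_iff hθ0).2 ?_
  calc hContent n (θ * d) E ≤ ∑' j, ENNReal.ofReal (c j).2 ^ (θ * d) := iInf₂_le c hc
    _ = ∑' j, (ENNReal.ofReal (c j).2 ^ d) ^ θ := by simp only [mul_comm θ, ENNReal.rpow_mul]
    _ ≤ (∑' j, ENNReal.ofReal (c j).2 ^ d) ^ θ := ENNReal.tsum_rpow_le_rpow_tsum hθ _

end HausdorffContent

section LorentzEmbedding

variable {α : Type*} [MeasurableSpace α] {μ : Measure α}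

theorem volume_setOf_ofReal_lt_inter_Ioi (c : ℝ≥0∞) :
    volume ({v : ℝ | ENNReal.ofReal v < c} ∩ Ioi 0) = c := by
  rcases eq_top_or_lt_top c with rfl | hc
  · simp [Real.volume_Ioi]
  · have hIoo : {v : ℝ | ENNReal.ofReal v < c} ∩ Ioi 0 = Ioo 0 c.toReal := by
      ext v
      simp only [mem_inter_iff, mem_ofPred_eq, mem_Ioi, mem_Ioo]
      exact ⟨fun h => ⟨h.2, (ENNReal.ofReal_lt_iff_lt_toReal h.2.le hc.ne).1 h.1⟩,
        fun h => ⟨(ENNReal.ofReal_lt_iff_lt_toReal h.1.le hc.ne).2 h.2, h.1⟩⟩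
    rw [hIoo, Real.volume_Ioo, sub_zero, ENNReal.ofReal_toReal hc.ne]

theorem lintegral_eq_lintegral_meas_ofReal_lt [SFinite μ] {m : α → ℝ≥0∞} (hm : Measurable m) :
    ∫⁻ x, m x ∂μ = ∫⁻ v in Ioi (0 : ℝ), μ {x | ENNReal.ofReal v < m x} := by
  set S := {p : α × ℝ | ENNReal.ofReal p.2 < m p.1}
  have hS : MeasurableSet S :=
    measurableSet_lt (ENNReal.measurable_ofReal.comp measurable_snd) (hm.comp measurable_fst)
  have hlevel : ∀ c : ℝ≥0∞, MeasurableSet {v : ℝ | ENNReal.ofReal v < c} := fun _ =>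
    measurableSet_lt ENNReal.measurable_ofReal measurable_const
  calc ∫⁻ x, m x ∂μ = ∫⁻ x, (∫⁻ v in Ioi (0 : ℝ), S.indicator 1 (x, v)) ∂μ := by
        congr with x
        rw [← volume_setOf_ofReal_lt_inter_Ioi (m x), ← Measure.restrict_apply (hlevel _),
          ← lintegral_indicator_one (hlevel _)]
        rfl
    _ = ∫⁻ v in Ioi (0 : ℝ), ∫⁻ x, S.indicator 1 (x, v) ∂μ :=
        lintegral_lintegral_swap (measurable_one.indicator hS).aemeasurable
    _ = ∫⁻ v in Ioi (0 : ℝ), μ {x | ENNReal.ofReal v < m x} := by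
        congr with v
        rw [← lintegral_indicator_one (measurableSet_lt measurable_const hm)]
        rfl

theorem lintegral_rpow_rpow_inv_le_lintegral_meas_rpow_inv_of_ne_top [SFinite μ] {θ : ℝ}
    (hθ : 1 ≤ θ) {m : α → ℝ≥0∞} (hm : Measurable m) (hfin : ∫⁻ x, m x ^ θ ∂μ ≠ ∞) :
    (∫⁻ x, m x ^ θ ∂μ) ^ θ⁻¹ ≤ ∫⁻ v in Ioi (0 : ℝ), μ {x | ENNReal.ofReal v < m x} ^ θ⁻¹ := by
  have hθ0 : 0 < θ := zero_lt_one.trans_le hθ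
  have hθ' : 0 ≤ 1 - θ⁻¹ := sub_nonneg.2 (inv_le_one_of_one_le₀ hθ)
  set W := ∫⁻ x, m x ^ θ ∂μ
  set ν := μ.withDensity fun x => m x ^ (θ - 1)
  have hlevel : ∀ v : ℝ,
      ν {x | ENNReal.ofReal v < m x} ≤ μ {x | ENNReal.ofReal v < m x} ^ θ⁻¹ * W ^ (1 - θ⁻¹) := by
    intro v
    set S := {x | ENNReal.ofReal v < m x}
    have hS : MeasurableSet S := measurableSet_lt measurable_const hm
    calc ν S = ∫⁻ x, S.indicator 1 x ^ θ⁻¹ * (m x ^ θ) ^ (1 - θ⁻¹) ∂μ := by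
          rw [withDensity_apply _ hS, ← lintegral_indicator hS]
          congr with x
          by_cases hx : x ∈ S
          · simp [hx, ← ENNReal.rpow_mul, mul_sub, hθ0.ne']
          · simp [hx, ENNReal.zero_rpow_of_pos (inv_pos.2 hθ0)]
      _ ≤ (∫⁻ x, S.indicator 1 x ∂μ) ^ θ⁻¹ * W ^ (1 - θ⁻¹) :=
          ENNReal.lintegral_mul_norm_pow_le (measurable_one.indicator hS).aemeasurable
            (hm.pow_const θ).aemeasurable (inv_nonneg.2 hθ0.le) hθ' (add_sub_cancel _ _)
      _ = μ S ^ θ⁻¹ * W ^ (1 - θ⁻¹) := by rw [lintegral_indicator_one hS]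
  have hW : W ≤ W ^ (1 - θ⁻¹) * ∫⁻ v in Ioi (0 : ℝ), μ {x | ENNReal.ofReal v < m x} ^ θ⁻¹ := by
    calc W = ∫⁻ x, m x ∂ν := by
          rw [lintegral_withDensity_eq_lintegral_mul _ (hm.pow_const _) hm]
          simp only [W, ENNReal.rpow_eq_rpow_sub_one_mul hθ, Pi.mul_apply]
      _ = ∫⁻ v in Ioi (0 : ℝ), ν {x | ENNReal.ofReal v < m x} :=
          lintegral_eq_lintegral_meas_ofReal_lt hm
      _ ≤ ∫⁻ v in Ioi (0 : ℝ), μ {x | ENNReal.ofReal v < m x} ^ θ⁻¹ * W ^ (1 - θ⁻¹) :=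
          lintegral_mono fun v => hlevel v
      _ = _ := by rw [lintegral_mul_const' _ _ (ENNReal.rpow_ne_top_of_nonneg hθ' hfin), mul_comm]
  rcases eq_or_ne W 0 with h0 | h0
  · simp [h0, ENNReal.zero_rpow_of_pos (inv_pos.2 hθ0)]
  have hWW : W = W ^ (1 - θ⁻¹) * W ^ θ⁻¹ := by
    rw [← ENNReal.rpow_add _ _ h0 hfin, sub_add_cancel, ENNReal.rpow_one]
  refine (ENNReal.mul_le_mul_iff_right (ENNReal.rpow_pos (pos_iff_ne_zero.2 h0) hfin).ne'
    (ENNReal.rpow_ne_top_of_nonneg hθ' hfin)).1 ?_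
  rwa [← hWW]

theorem exists_monotone_iSup_eq_lintegral_rpow_ne_top [SigmaFinite μ] {θ : ℝ} (hθ : 0 < θ)
    {m : α → ℝ≥0∞} (hm : Measurable m) :
    ∃ mk : ℕ → α → ℝ≥0∞, (∀ k, Measurable (mk k)) ∧ Monotone mk ∧ (∀ x, ⨆ k, mk k x = m x) ∧
      ∀ k, ∫⁻ x, mk k x ^ θ ∂μ ≠ ∞ := by
  refine ⟨fun k => (spanningSets μ k).indicator fun x => min (m x) k,
    fun k => (hm.min measurable_const).indicator (measurableSet_spanningSets μ k),
    fun i j hij => (indicator_le_indicator_of_subset (spanningSets_mono hij) fun _ => zero_le).trans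
      fun x => indicator_le_indicator (min_le_min_left _ (by exact_mod_cast hij)),
    fun x => ?_, fun k => ?_⟩
  · refine le_antisymm (iSup_le fun k => ?_) (ENNReal.le_of_forall_nnreal_lt fun r hr => ?_)
    · exact (indicator_le_self' (fun _ _ => zero_le) x).trans (min_le_left _ _)
    obtain ⟨k₀, hk₀⟩ := ENNReal.exists_nat_gt (ENNReal.coe_ne_top (r := r))
    have hx : x ∈ spanningSets μ (k₀ + spanningSetsIndex μ x) :=
      spanningSets_mono (Nat.le_add_left _ _) (mem_spanningSetsIndex μ x)
    refine le_iSup_of_le (k₀ + spanningSetsIndex μ x) ?_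
    simp only [indicator_of_mem hx]
    exact le_min hr.le (hk₀.le.trans (by exact_mod_cast Nat.le_add_right _ _))
  · refine ne_top_of_le_ne_top
      (b := ∫⁻ x, (spanningSets μ k).indicator (fun _ => (k : ℝ≥0∞) ^ θ) x ∂μ) ?_
      (lintegral_mono fun x => ?_)
    · rw [lintegral_indicator_const (measurableSet_spanningSets μ k)]
      exact ENNReal.mul_ne_top (by simp [hθ.le]) (measure_spanningSets_lt_top μ k).ne
    · by_cases hx : x ∈ spanningSets μ k
      · simp only [indicator_of_mem hx]
        exact ENNReal.rpow_le_rpow (min_le_right _ _) hθ.le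
      · simp [indicator_of_notMem hx, ENNReal.zero_rpow_of_pos hθ]

theorem lintegral_rpow_rpow_inv_le_lintegral_meas_rpow_inv [SigmaFinite μ] {θ : ℝ}
    (hθ : 1 ≤ θ) {m : α → ℝ≥0∞} (hm : Measurable m) :
    (∫⁻ x, m x ^ θ ∂μ) ^ θ⁻¹ ≤ ∫⁻ v in Ioi (0 : ℝ), μ {x | ENNReal.ofReal v < m x} ^ θ⁻¹ := by
  have hθ0 : 0 < θ := zero_lt_one.trans_le hθ
  obtain ⟨mk, mk_meas, mk_mono, mk_iSup, mk_fin⟩ :=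
    exists_monotone_iSup_eq_lintegral_rpow_ne_top (μ := μ) hθ0 hm
  have mk_le : ∀ k x, mk k x ≤ m x := fun k x => mk_iSup x ▸ le_iSup (mk · x) k
  rw [ENNReal.rpow_inv_le_iff hθ0]
  calc ∫⁻ x, m x ^ θ ∂μ = ∫⁻ x, ⨆ k, mk k x ^ θ ∂μ := by
        congr with x
        rw [← mk_iSup x, (ENNReal.monotone_rpow_of_nonneg hθ0.le).map_iSup_of_continuousAt
          ENNReal.continuous_rpow_const.continuousAt (ENNReal.zero_rpow_of_pos hθ0)]
    _ = ⨆ k, ∫⁻ x, mk k x ^ θ ∂μ :=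
        lintegral_iSup (fun k => (mk_meas k).pow_const θ)
          fun i j hij x => ENNReal.rpow_le_rpow (mk_mono hij x) hθ0.le
    _ ≤ _ := iSup_le fun k => (ENNReal.rpow_inv_le_iff hθ0).1 <|
        (lintegral_rpow_rpow_inv_le_lintegral_meas_rpow_inv_of_ne_top hθ (mk_meas k)
          (mk_fin k)).trans <| lintegral_mono fun v => ENNReal.rpow_le_rpow
            (measure_mono fun x hx => hx.trans_le (mk_le k x)) (inv_nonneg.2 hθ0.le)

end LorentzEmbedding

theorem volume_preimage_rpow_inv_inter_Ioi_le {S : Set ℝ} (hS : ∀ s ∈ S, Ioc 0 s ⊆ S) {θ : ℝ}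
    (hθ : 0 < θ) : volume ((· ^ θ⁻¹) ⁻¹' S ∩ Ioi 0) ≤ volume (S ∩ Ioi 0) ^ θ := by
  rcases eq_top_or_lt_top (volume (S ∩ Ioi 0)) with htop | hfin
  · simp [htop, ENNReal.top_rpow_of_pos hθ]
  set r := (volume (S ∩ Ioi 0)).toReal
  have hbound : ∀ s ∈ S, 0 < s → s ≤ r := fun s hs hs0 => by
    have := measure_mono (μ := volume) (subset_inter (hS s hs) Ioc_subset_Ioi_self)
    rwa [Real.volume_Ioc, sub_zero, ENNReal.ofReal_le_iff_le_toReal hfin.ne] at this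
  calc volume ((· ^ θ⁻¹) ⁻¹' S ∩ Ioi 0) ≤ volume (Ioc 0 (r ^ θ)) := by
        refine measure_mono fun t ⟨ht, ht0⟩ => ⟨ht0, ?_⟩
        calc t = (t ^ θ⁻¹) ^ θ := (Real.rpow_inv_rpow ht0.le hθ.ne').symm
          _ ≤ r ^ θ := Real.rpow_le_rpow (Real.rpow_nonneg ht0.le _)
              (hbound _ ht (Real.rpow_pos_of_pos ht0 _)) hθ.le
    _ = volume (S ∩ Ioi 0) ^ θ := by
        rw [Real.volume_Ioc, sub_zero, ← ENNReal.ofReal_rpow_of_nonneg ENNReal.toReal_nonneg hθ.le,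
          ENNReal.ofReal_toReal hfin.ne]

theorem Antitone.setLIntegral_rpow_comp_rpow_inv_le {F : ℝ → ℝ≥0∞} (hF : Antitone F) {θ : ℝ}
    (hθ : 1 ≤ θ) :
    ∫⁻ t in Ioi (0 : ℝ), F (t ^ θ⁻¹) ^ θ ≤ (∫⁻ s in Ioi (0 : ℝ), F s) ^ θ := by
  have hθ0 : 0 < θ := zero_lt_one.trans_le hθ
  rw [← ENNReal.rpow_inv_le_iff hθ0]
  calc (∫⁻ t in Ioi (0 : ℝ), F (t ^ θ⁻¹) ^ θ) ^ θ⁻¹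
      ≤ ∫⁻ v in Ioi (0 : ℝ), volume.restrict (Ioi 0) {t | ENNReal.ofReal v < F (t ^ θ⁻¹)} ^ θ⁻¹ :=
        lintegral_rpow_rpow_inv_le_lintegral_meas_rpow_inv hθ
          (hF.measurable.comp (measurable_id.pow_const _))
    _ ≤ ∫⁻ v in Ioi (0 : ℝ), volume.restrict (Ioi 0) {s | ENNReal.ofReal v < F s} :=
        lintegral_mono fun v => by
          rw [Measure.restrict_apply' measurableSet_Ioi, Measure.restrict_apply' measurableSet_Ioi,
            ENNReal.rpow_inv_le_iff hθ0]
          exact volume_preimage_rpow_inv_inter_Ioi_le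
            (fun s hs x hx => hs.trans_le (hF hx.2)) hθ0
    _ = ∫⁻ s in Ioi (0 : ℝ), F s := (lintegral_eq_lintegral_meas_ofReal_lt hF.measurable).symm

section Choquet

variable {n : ℕ}

theorem choquetIntegral_rpow_le {d θ : ℝ} (hθ : 1 ≤ θ) (h : (Fin n → ℝ) → ℝ≥0∞) :
    choquetIntegral n (θ * d) (fun x => h x ^ θ) ≤ choquetIntegral n d h ^ θ := by
  have hθ0 : 0 < θ := zero_lt_one.trans_le hθ
  have hlevel : ∀ t : ℝ, 0 < t →
      {x | ENNReal.ofReal t < h x ^ θ} = {x | ENNReal.ofReal (t ^ θ⁻¹) < h x} := fun t ht => by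
    ext x
    rw [mem_ofPred_eq, mem_ofPred_eq, ← ENNReal.ofReal_rpow_of_pos ht, ENNReal.rpow_inv_lt_iff hθ0]
  have hF : Antitone fun s : ℝ => hContent n d {x | ENNReal.ofReal s < h x} := fun s s' hss' =>
    hContent_mono fun x hx => (ENNReal.ofReal_le_ofReal hss').trans_lt hx
  calc choquetIntegral n (θ * d) (fun x => h x ^ θ)
      ≤ ∫⁻ t in Ioi (0 : ℝ), hContent n d {x | ENNReal.ofReal (t ^ θ⁻¹) < h x} ^ θ :=
        setLIntegral_mono' measurableSet_Ioi fun t ht => hlevel t ht ▸ hContent_mul_le_rpow hθ _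
    _ ≤ choquetIntegral n d h ^ θ := hF.setLIntegral_rpow_comp_rpow_inv_le hθ

theorem morreyNormE_mul_le {d p q θ : ℝ} (hθ : 1 ≤ θ) (hq : 0 < q) (g : (Fin n → ℝ) → ℝ≥0∞) :
    morreyNormE n (θ * d) (θ * p) (θ * q) g ≤ morreyNormE n d p q g := by
  have hθ0 : 0 < θ := zero_lt_one.trans_le hθ
  refine iSup_le fun a => iSup₂_le fun l hl => le_iSup_of_le a <| le_iSup₂_of_le l hl ?_
  have hexp : θ * d / (θ * p) - θ * d / (θ * q) = d / p - d / q := by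
    rw [mul_div_mul_left _ _ hθ0.ne', mul_div_mul_left _ _ hθ0.ne']
  have hind : ((cubeSet n a l).indicator fun x => g x ^ (θ * q)) =
      fun x => (cubeSet n a l).indicator (fun x => g x ^ q) x ^ θ := by
    funext x
    by_cases hx : x ∈ cubeSet n a l
    · simp [hx, mul_comm θ, ENNReal.rpow_mul]
    · simp [hx, ENNReal.zero_rpow_of_pos hθ0]
  rw [hexp, hind]
  gcongr _ * ?_
  calc _ ≤ (choquetIntegral n d ((cubeSet n a l).indicator fun x => g x ^ q) ^ θ) ^ (1 / (θ * q)) :=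
        ENNReal.rpow_le_rpow (choquetIntegral_rpow_le hθ _) (by positivity)
    _ = _ := by
        rw [← ENNReal.rpow_mul]
        field_simp

end Choquet

theorem morrey_embedding_general (n : ℕ) (d p q θ : ℝ)
    (hθ1 : 1 ≤ θ)
    (hq : 0 < q) :
    ∀ f : (Fin n → ℝ) → ℝ, Measurable f →
      morreyNorm n (θ * d) (θ * p) (θ * q) f ≤
        ENNReal.ofReal θ * morreyNorm n d p q f := by
  intro f _
  calc morreyNorm n (θ * d) (θ * p) (θ * q) f ≤ morreyNorm n d p q f :=
        morreyNormE_mul_le hθ1 hq _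
    _ ≤ ENNReal.ofReal θ * morreyNorm n d p q f :=
        le_mul_of_one_le_left zero_le (ENNReal.one_le_ofReal.2 hθ1)

/-- (M5): `𝓜^p_q(H^d) ↪ 𝓜^{θp}_{θq}(H^{θd})` with constant `θ`. -/
theorem morrey_embedding (n : ℕ) (d p q θ : ℝ)
    (hd : 0 < d) (hdn : d ≤ n) (hθ1 : 1 ≤ θ) (hθ : θ * d ≤ n)
    (hq : 0 < q) (hqp : q ≤ p) :
    ∀ f : (Fin n → ℝ) → ℝ, Measurable f →
      morreyNorm n (θ * d) (θ * p) (θ * q) f ≤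
        ENNReal.ofReal θ * morreyNorm n d p q f :=
  morrey_embedding_general n d p q θ hθ1 hq

end
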